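/- arXiv:1104.4911 — 2 statements merged into one kernel-verified Lean document; each statement's English description precedes it below -/
import Mathlib

section
/- The mean square error of the polynomial expansion estimator is a quadratic in the weights: with H ∈ ℂ^{N×K}, B = HH^H, noise n ∼ 𝒞𝒩(0,σ²I_N) independent of x with E[xx^H]=I_K, and estimator x̂ = H^H (∑_{l=0}^{L-1} u_l B^l)(Hx+n), the expected squared error E‖x - x̂‖² equals K - 2∑_l u_l tr(B^{l+1}) + ∑_{i,j} u_i u_j (tr(B^{i+j+2}) + σ² tr(B^{i+j+1})), where expectation is over x and n for fixed H. -/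
open Matrix MeasureTheory


/-- Pointwise expansion of `|p + q|²` into a quadruple sum of products. -/
lemma mse_expand_sq {K' N' : ℕ} (M : Matrix (Fin K') (Fin K') ℂ)
    (C : Matrix (Fin K') (Fin N') ℂ) (xv : Fin K' → ℂ) (nw : Fin N' → ℂ) (i : Fin K') :
    ((∑ a, M i a * xv a) + ∑ b, C i b * nw b) *
        star ((∑ a, M i a * xv a) + ∑ b, C i b * nw b)
      = (∑ a, ∑ a', (M i a * star (M i a')) * (xv a * star (xv a')))
        + (∑ a, ∑ b, (M i a * star (C i b)) * (xv a * star (nw b)))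
        + (∑ b, ∑ a, (C i b * star (M i a)) * star (xv a * star (nw b)))
        + (∑ b, ∑ b', (C i b * star (C i b')) * (nw b * star (nw b'))) := by
  rw [star_add, star_sum, star_sum, add_mul, mul_add, mul_add]
  rw [Finset.sum_mul_sum, Finset.sum_mul_sum, Finset.sum_mul_sum, Finset.sum_mul_sum]
  have h1 : ∀ a a', (M i a * xv a) * star (M i a' * xv a')
      = (M i a * star (M i a')) * (xv a * star (xv a')) := by
    intro a a'; rw [star_mul']; ring
  have h2 : ∀ a b, (M i a * xv a) * star (C i b * nw b)
      = (M i a * star (C i b)) * (xv a * star (nw b)) := by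
    intro a b; rw [star_mul']; ring
  have h3 : ∀ b a, (C i b * nw b) * star (M i a * xv a)
      = (C i b * star (M i a)) * star (xv a * star (nw b)) := by
    intro b a; rw [star_mul', star_mul', star_star]; ring
  have h4 : ∀ b b', (C i b * nw b) * star (C i b' * nw b')
      = (C i b * star (C i b')) * (nw b * star (nw b')) := by
    intro b b'; rw [star_mul']; ring
  simp only [h1, h2, h3, h4]
  ring


lemma mse_key_integral (N K : ℕ) (s2 : ℝ)
    {Ω : Type*} [MeasurableSpace Ω] (μ : Measure Ω) [IsProbabilityMeasure μ]
    (x : Ω → Fin K → ℂ) (nv : Ω → Fin N → ℂ)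
    (hxx : ∀ i j, ∫ ω, x ω i * star (x ω j) ∂μ = if i = j then 1 else 0)
    (hnn : ∀ i j, ∫ ω, nv ω i * star (nv ω j) ∂μ = if i = j then (s2 : ℂ) else 0)
    (hxn : ∀ i j, ∫ ω, x ω i * star (nv ω j) ∂μ = 0)
    (hixx : ∀ i j, Integrable (fun ω => x ω i * star (x ω j)) μ)
    (hinn : ∀ i j, Integrable (fun ω => nv ω i * star (nv ω j)) μ)
    (hixn : ∀ i j, Integrable (fun ω => x ω i * star (nv ω j)) μ)
    (M : Matrix (Fin K) (Fin K) ℂ) (C : Matrix (Fin K) (Fin N) ℂ) :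
    (∫ ω, ∑ i, Complex.normSq ((∑ a, M i a * x ω a) + ∑ b, C i b * nv ω b) ∂μ)
      = ((M * Mᴴ).trace + (s2 : ℂ) * (C * Cᴴ).trace).re := by
  -- integrability of the conjugated cross terms
  have hconj : ∀ a b, Integrable (fun ω => star (x ω a * star (nv ω b))) μ := by
    intro a b
    simpa using (Complex.conjCLE.toContinuousLinearMap).integrable_comp (hixn a b)
  -- the four families of integrable functions
  have hT1 : ∀ i : Fin K, Integrable (fun ω =>
      ∑ a, ∑ a', (M i a * star (M i a')) * (x ω a * star (x ω a'))) μ := fun i =>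
    integrable_finset_sum _ fun a _ => integrable_finset_sum _ fun a' _ =>
      (hixx a a').const_mul _
  have hT2 : ∀ i : Fin K, Integrable (fun ω =>
      ∑ a, ∑ b, (M i a * star (C i b)) * (x ω a * star (nv ω b))) μ := fun i =>
    integrable_finset_sum _ fun a _ => integrable_finset_sum _ fun b _ =>
      (hixn a b).const_mul _
  have hT3 : ∀ i : Fin K, Integrable (fun ω =>
      ∑ b, ∑ a, (C i b * star (M i a)) * star (x ω a * star (nv ω b))) μ := fun i =>
    integrable_finset_sum _ fun b _ => integrable_finset_sum _ fun a _ =>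
      (hconj a b).const_mul _
  have hT4 : ∀ i : Fin K, Integrable (fun ω =>
      ∑ b, ∑ b', (C i b * star (C i b')) * (nv ω b * star (nv ω b'))) μ := fun i =>
    integrable_finset_sum _ fun b _ => integrable_finset_sum _ fun b' _ =>
      (hinn b b').const_mul _
  -- the four integrals
  have iT1 : ∀ i : Fin K, (∫ ω, ∑ a, ∑ a',
      (M i a * star (M i a')) * (x ω a * star (x ω a')) ∂μ)
      = ∑ a, M i a * star (M i a) := by
    intro i
    rw [integral_finset_sum _ fun a _ => integrable_finset_sum _ fun a' _ =>
      (hixx a a').const_mul _]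
    refine Finset.sum_congr rfl fun a _ => ?_
    rw [integral_finset_sum _ fun a' _ => (hixx a a').const_mul _]
    simp only [integral_const_mul, hxx, mul_ite, mul_one, mul_zero, Finset.sum_ite_eq,
      Finset.mem_univ, if_true]
  have iT2 : ∀ i : Fin K, (∫ ω, ∑ a, ∑ b,
      (M i a * star (C i b)) * (x ω a * star (nv ω b)) ∂μ) = 0 := by
    intro i
    rw [integral_finset_sum _ fun a _ => integrable_finset_sum _ fun b _ =>
      (hixn a b).const_mul _]
    refine Finset.sum_eq_zero fun a _ => ?_
    rw [integral_finset_sum _ fun b _ => (hixn a b).const_mul _]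
    refine Finset.sum_eq_zero fun b _ => ?_
    rw [integral_const_mul, hxn, mul_zero]
  have hstar0 : ∀ a b, (∫ ω, star (x ω a * star (nv ω b)) ∂μ) = 0 := by
    intro a b
    have h := integral_conj (μ := μ) (f := fun ω => x ω a * star (nv ω b))
    simp only [starRingEnd_apply] at h
    rw [h, hxn, star_zero]
  have iT3 : ∀ i : Fin K, (∫ ω, ∑ b, ∑ a,
      (C i b * star (M i a)) * star (x ω a * star (nv ω b)) ∂μ) = 0 := by
    intro i
    rw [integral_finset_sum _ fun b _ => integrable_finset_sum _ fun a _ =>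
      (hconj a b).const_mul _]
    refine Finset.sum_eq_zero fun b _ => ?_
    rw [integral_finset_sum _ fun a _ => (hconj a b).const_mul _]
    refine Finset.sum_eq_zero fun a _ => ?_
    rw [integral_const_mul, hstar0, mul_zero]
  have iT4 : ∀ i : Fin K, (∫ ω, ∑ b, ∑ b',
      (C i b * star (C i b')) * (nv ω b * star (nv ω b')) ∂μ)
      = ∑ b, (C i b * star (C i b)) * (s2 : ℂ) := by
    intro i
    rw [integral_finset_sum _ fun b _ => integrable_finset_sum _ fun b' _ =>
      (hinn b b').const_mul _]
    refine Finset.sum_congr rfl fun b _ => ?_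
    rw [integral_finset_sum _ fun b' _ => (hinn b b').const_mul _]
    simp only [integral_const_mul, hnn, mul_ite, mul_one, mul_zero, Finset.sum_ite_eq,
      Finset.mem_univ, if_true]
  -- rewrite the integrand
  have hpt : ∀ ω, (∑ i, Complex.normSq ((∑ a, M i a * x ω a) + ∑ b, C i b * nv ω b))
      = (∑ i : Fin K,
          ((∑ a, ∑ a', (M i a * star (M i a')) * (x ω a * star (x ω a')))
          + (∑ a, ∑ b, (M i a * star (C i b)) * (x ω a * star (nv ω b)))
          + (∑ b, ∑ a, (C i b * star (M i a)) * star (x ω a * star (nv ω b)))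
          + (∑ b, ∑ b', (C i b * star (C i b')) * (nv ω b * star (nv ω b'))))).re := by
    intro ω
    rw [Complex.re_sum]
    refine Finset.sum_congr rfl fun i _ => ?_
    rw [← mse_expand_sq M C (x ω) (nv ω) i]
    rw [Complex.star_def, Complex.mul_conj, Complex.ofReal_re]
  have hT12 : ∀ i : Fin K, Integrable (fun ω =>
      (∑ a, ∑ a', (M i a * star (M i a')) * (x ω a * star (x ω a')))
      + (∑ a, ∑ b, (M i a * star (C i b)) * (x ω a * star (nv ω b)))) μ :=
    fun i => (hT1 i).add (hT2 i)
  have hT123 : ∀ i : Fin K, Integrable (fun ω =>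
      (∑ a, ∑ a', (M i a * star (M i a')) * (x ω a * star (x ω a')))
      + (∑ a, ∑ b, (M i a * star (C i b)) * (x ω a * star (nv ω b)))
      + (∑ b, ∑ a, (C i b * star (M i a)) * star (x ω a * star (nv ω b)))) μ :=
    fun i => (hT12 i).add (hT3 i)
  have hT1234 : ∀ i : Fin K, Integrable (fun ω =>
      (∑ a, ∑ a', (M i a * star (M i a')) * (x ω a * star (x ω a')))
      + (∑ a, ∑ b, (M i a * star (C i b)) * (x ω a * star (nv ω b)))
      + (∑ b, ∑ a, (C i b * star (M i a)) * star (x ω a * star (nv ω b)))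
      + (∑ b, ∑ b', (C i b * star (C i b')) * (nv ω b * star (nv ω b')))) μ :=
    fun i => (hT123 i).add (hT4 i)
  have hG : Integrable (fun ω => ∑ i : Fin K,
      ((∑ a, ∑ a', (M i a * star (M i a')) * (x ω a * star (x ω a')))
      + (∑ a, ∑ b, (M i a * star (C i b)) * (x ω a * star (nv ω b)))
      + (∑ b, ∑ a, (C i b * star (M i a)) * star (x ω a * star (nv ω b)))
      + (∑ b, ∑ b', (C i b * star (C i b')) * (nv ω b * star (nv ω b'))))) μ := by
    apply integrable_finset_sum
    intro i _
    exact hT1234 i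
  have hre := integral_re hG
  simp only [RCLike.re_to_complex] at hre
  simp only [hpt]
  rw [hre]
  congr 1
  have hsum : (∫ ω, ∑ i : Fin K,
      ((∑ a, ∑ a', (M i a * star (M i a')) * (x ω a * star (x ω a')))
      + (∑ a, ∑ b, (M i a * star (C i b)) * (x ω a * star (nv ω b)))
      + (∑ b, ∑ a, (C i b * star (M i a)) * star (x ω a * star (nv ω b)))
      + (∑ b, ∑ b', (C i b * star (C i b')) * (nv ω b * star (nv ω b')))) ∂μ)
      = ∑ i : Fin K, ∫ ω,
      ((∑ a, ∑ a', (M i a * star (M i a')) * (x ω a * star (x ω a')))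
      + (∑ a, ∑ b, (M i a * star (C i b)) * (x ω a * star (nv ω b)))
      + (∑ b, ∑ a, (C i b * star (M i a)) * star (x ω a * star (nv ω b)))
      + (∑ b, ∑ b', (C i b * star (C i b')) * (nv ω b * star (nv ω b')))) ∂μ := by
    apply integral_finset_sum
    intro i _
    exact hT1234 i
  rw [hsum]
  have this1 : ∀ i : Fin K, (∫ ω,
      ((∑ a, ∑ a', (M i a * star (M i a')) * (x ω a * star (x ω a')))
      + (∑ a, ∑ b, (M i a * star (C i b)) * (x ω a * star (nv ω b)))
      + (∑ b, ∑ a, (C i b * star (M i a)) * star (x ω a * star (nv ω b)))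
      + (∑ b, ∑ b', (C i b * star (C i b')) * (nv ω b * star (nv ω b')))) ∂μ)
      = (∑ a, M i a * star (M i a)) + ∑ b, (C i b * star (C i b)) * (s2 : ℂ) := by
    intro i
    rw [integral_add (hT123 i) (hT4 i), integral_add (hT12 i) (hT3 i),
        integral_add (hT1 i) (hT2 i), iT1, iT2, iT3, iT4]
    ring
  simp only [this1]
  have htrM : (M * Mᴴ).trace = ∑ i : Fin K, ∑ a : Fin K, M i a * star (M i a) := by
    simp [Matrix.trace, Matrix.diag, Matrix.mul_apply, Matrix.conjTranspose_apply]
  have htrC : (C * Cᴴ).trace = ∑ i : Fin K, ∑ b : Fin N, C i b * star (C i b) := by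
    simp [Matrix.trace, Matrix.diag, Matrix.mul_apply, Matrix.conjTranspose_apply]
  rw [Finset.sum_add_distrib, htrM, htrC, Finset.mul_sum]
  congr 1
  refine Finset.sum_congr rfl fun i _ => ?_
  rw [Finset.mul_sum]
  exact Finset.sum_congr rfl fun b _ => by ring

/-- The mean square error of the polynomial expansion estimator
`x̂ = Hᴴ (∑ₗ uₗ Bˡ)(Hx + n)` is a quadratic in the weights:
`E‖x - x̂‖² = K - 2∑ₗ uₗ tr B^{l+1} + ∑_{i,j} uᵢuⱼ (tr B^{i+j+2} + σ² tr B^{i+j+1})`. -/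
theorem mse_polynomial_expansion
    (N K L : ℕ) (H : Matrix (Fin N) (Fin K) ℂ) (s2 : ℝ) (u : Fin L → ℝ)
    {Ω : Type*} [MeasurableSpace Ω] (μ : Measure Ω) [IsProbabilityMeasure μ]
    (x : Ω → Fin K → ℂ) (nv : Ω → Fin N → ℂ)
    (hxx : ∀ i j, ∫ ω, x ω i * star (x ω j) ∂μ = if i = j then 1 else 0)
    (hnn : ∀ i j, ∫ ω, nv ω i * star (nv ω j) ∂μ = if i = j then (s2 : ℂ) else 0)
    (hxn : ∀ i j, ∫ ω, x ω i * star (nv ω j) ∂μ = 0)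
    (hixx : ∀ i j, Integrable (fun ω => x ω i * star (x ω j)) μ)
    (hinn : ∀ i j, Integrable (fun ω => nv ω i * star (nv ω j)) μ)
    (hixn : ∀ i j, Integrable (fun ω => x ω i * star (nv ω j)) μ) :
    let B : Matrix (Fin N) (Fin N) ℂ := H * Hᴴ
    let P : Matrix (Fin N) (Fin N) ℂ := ∑ l : Fin L, ((u l : ℂ) • B ^ (l : ℕ))
    (∫ ω, ∑ i, Complex.normSq
        (x ω i - (Hᴴ *ᵥ (P *ᵥ (H *ᵥ x ω + nv ω))) i) ∂μ)
      = (K : ℝ) - 2 * ∑ l : Fin L, u l * ((B ^ ((l : ℕ) + 1)).trace).re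
        + ∑ i : Fin L, ∑ j : Fin L, u i * u j *
            (((B ^ ((i : ℕ) + (j : ℕ) + 2)).trace).re
              + s2 * ((B ^ ((i : ℕ) + (j : ℕ) + 1)).trace).re) := by
  intro B P
  have hBdef : B = H * Hᴴ := rfl
  have hPdef : P = ∑ l : Fin L, ((u l : ℂ) • B ^ (l : ℕ)) := rfl
  set X : Matrix (Fin K) (Fin K) ℂ := Hᴴ * P * H with hX
  set M : Matrix (Fin K) (Fin K) ℂ := 1 - X with hM
  set C : Matrix (Fin K) (Fin N) ℂ := -(Hᴴ * P) with hC
  -- Step 1: rewrite the error vector entrywise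
  have hv : ∀ ω, Hᴴ *ᵥ (P *ᵥ (H *ᵥ x ω + nv ω))
      = X *ᵥ x ω + (Hᴴ * P) *ᵥ nv ω := by
    intro ω
    rw [Matrix.mulVec_add, Matrix.mulVec_add, Matrix.mulVec_mulVec,
        Matrix.mulVec_mulVec, Matrix.mulVec_mulVec, hX, Matrix.mul_assoc]
  have hpt : ∀ ω i, x ω i - (Hᴴ *ᵥ (P *ᵥ (H *ᵥ x ω + nv ω))) i
      = (∑ a, M i a * x ω a) + ∑ b, C i b * nv ω b := by
    intro ω i
    rw [hv]
    have h1 : (∑ a, M i a * x ω a) = (M *ᵥ x ω) i := by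
      simp [Matrix.mulVec, dotProduct]
    have h2 : (∑ b, C i b * nv ω b) = (C *ᵥ nv ω) i := by
      simp [Matrix.mulVec, dotProduct]
    rw [h1, h2, hM, hC, Matrix.sub_mulVec, Matrix.one_mulVec, Matrix.neg_mulVec]
    simp only [Pi.add_apply, Pi.sub_apply, Pi.neg_apply]
    ring
  simp only [hpt]
  rw [mse_key_integral N K s2 μ x nv hxx hnn hxn hixx hinn hixn M C]
  -- Step 2: matrix algebra
  have hB : Bᴴ = B := by
    rw [hBdef, Matrix.conjTranspose_mul, Matrix.conjTranspose_conjTranspose]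
  have hP : Pᴴ = P := by
    rw [hPdef, Matrix.conjTranspose_sum]
    refine Finset.sum_congr rfl fun l _ => ?_
    rw [Matrix.conjTranspose_smul, Matrix.conjTranspose_pow, hB]
    congr 1
    simp [Complex.star_def]
  have keytr : ∀ Q : Matrix (Fin N) (Fin N) ℂ, (Hᴴ * Q * H).trace = (Q * B).trace := by
    intro Q
    rw [Matrix.trace_mul_cycle, ← hBdef, Matrix.trace_mul_comm]
  have hPB : P * B = ∑ l : Fin L, (u l : ℂ) • B ^ ((l : ℕ) + 1) := by
    rw [hPdef, Finset.sum_mul]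
    refine Finset.sum_congr rfl fun l _ => ?_
    rw [Matrix.smul_mul, pow_succ]
  have htrX : X.trace = ∑ l : Fin L, (u l : ℂ) * (B ^ ((l : ℕ) + 1)).trace := by
    rw [hX, keytr, hPB, Matrix.trace_sum]
    refine Finset.sum_congr rfl fun l _ => ?_
    rw [Matrix.trace_smul, smul_eq_mul]
  have hXH : Xᴴ = Hᴴ * (P * H) := by
    rw [hX, Matrix.conjTranspose_mul, Matrix.conjTranspose_mul, hP,
        Matrix.conjTranspose_conjTranspose]
  have htrXX : (X * Xᴴ).trace
      = ∑ i : Fin L, ∑ j : Fin L,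
          ((u i : ℂ) * (u j : ℂ)) * (B ^ ((i : ℕ) + (j : ℕ) + 2)).trace := by
    have hxxq : X * Xᴴ = Hᴴ * (P * B * P) * H := by
      rw [hXH, hX, hBdef]
      simp only [Matrix.mul_assoc]
    rw [hxxq, keytr]
    have : P * B * P * B = (P * B) * (P * B) := by
      simp only [Matrix.mul_assoc]
    rw [this, hPB, Finset.sum_mul_sum, Matrix.trace_sum]
    refine Finset.sum_congr rfl fun i _ => ?_
    rw [Matrix.trace_sum]
    refine Finset.sum_congr rfl fun j _ => ?_
    have harith : (i : ℕ) + 1 + ((j : ℕ) + 1) = (i : ℕ) + (j : ℕ) + 2 := by omega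
    rw [smul_mul_smul_comm, ← pow_add, harith, Matrix.trace_smul, smul_eq_mul]
  have htrCC : (C * Cᴴ).trace
      = ∑ i : Fin L, ∑ j : Fin L,
          ((u i : ℂ) * (u j : ℂ)) * (B ^ ((i : ℕ) + (j : ℕ) + 1)).trace := by
    have hcc : C * Cᴴ = Hᴴ * (P * P) * H := by
      rw [hC, Matrix.conjTranspose_neg, Matrix.neg_mul, Matrix.mul_neg, neg_neg,
          Matrix.conjTranspose_mul, hP, Matrix.conjTranspose_conjTranspose]
      simp only [Matrix.mul_assoc]
    rw [hcc, keytr]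
    have : P * P * B = P * (P * B) := by simp only [Matrix.mul_assoc]
    rw [this, hPB, hPdef, Finset.sum_mul_sum, Matrix.trace_sum]
    refine Finset.sum_congr rfl fun i _ => ?_
    rw [Matrix.trace_sum]
    refine Finset.sum_congr rfl fun j _ => ?_
    have harith : (i : ℕ) + ((j : ℕ) + 1) = (i : ℕ) + (j : ℕ) + 1 := by omega
    rw [smul_mul_smul_comm, ← pow_add, harith, Matrix.trace_smul, smul_eq_mul]
  have htrM : (M * Mᴴ).trace = (K : ℂ) - star X.trace - X.trace + (X * Xᴴ).trace := by
    have hMH : Mᴴ = 1 - Xᴴ := by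
      rw [hM, Matrix.conjTranspose_sub, Matrix.conjTranspose_one]
    have hMM : M * Mᴴ = 1 - Xᴴ - X + X * Xᴴ := by
      rw [hM, hMH]
      noncomm_ring
    rw [hMM, Matrix.trace_add, Matrix.trace_sub, Matrix.trace_sub, Matrix.trace_one,
        Matrix.trace_conjTranspose]
    simp [Fintype.card_fin]
  -- Step 3: take real parts and conclude
  rw [htrM, htrX, htrXX, htrCC]
  simp only [← Complex.ofReal_mul, RCLike.star_def, Complex.add_re, Complex.sub_re,
    Complex.conj_re, Complex.re_sum, Complex.re_ofReal_mul, Complex.natCast_re]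
  have hmerge : (∑ i : Fin L, ∑ j : Fin L,
        (u i * u j) * ((B ^ ((i : ℕ) + (j : ℕ) + 2)).trace).re)
      + s2 * (∑ i : Fin L, ∑ j : Fin L,
        (u i * u j) * ((B ^ ((i : ℕ) + (j : ℕ) + 1)).trace).re)
      = ∑ i : Fin L, ∑ j : Fin L, u i * u j *
          (((B ^ ((i : ℕ) + (j : ℕ) + 2)).trace).re
            + s2 * ((B ^ ((i : ℕ) + (j : ℕ) + 1)).trace).re) := by
    rw [Finset.mul_sum, ← Finset.sum_add_distrib]
    refine Finset.sum_congr rfl fun i _ => ?_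
    rw [Finset.mul_sum, ← Finset.sum_add_distrib]
    refine Finset.sum_congr rfl fun j _ => ?_
    ring
  linarith [hmerge]
end

section
/- SINR expression for linear detectors: let H ∈ ℂ^{N×K}, B=HH^H, and fix a transmitter index k. For the estimator x̂_k = h_k^H (∑_{l=0}^{L-1} w_l B^l)(Hx + n) with E[xx^H]=I_K, E[nn^H]=σ²I_N, x and n independent zero-mean, the SINR (ratio of the power of the signal component due to x_k to the power of all remaining components) equals (wᵀφ_k φ_kᵀ w) / (wᵀ(Φ_k - φ_k φ_kᵀ)w), where [Φ_k]_{ij} = [B^{i+j}]_{kk} + σ²[B^{i+j-1}]_{kk} (indices i,j from 1 to L) and [φ_k]_i = [B^i]_{kk}, provided the denominator is nonzero. -/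
/-!
Write `x̂ₖ = c ⬝ x + r ⬝ n` with `c = hₖᴴ P H` and `r = hₖᴴ P`. Because `x` and `n` are white
and uncorrelated, `E|x̂ₖ|² = ‖c‖² + σ² ‖r‖² = hₖᴴ (P B P + σ² P²) hₖ`, and expanding
`P = ∑ₗ wₗ Bˡ` turns this into the quadratic form `wᵀ Φₖ w`; the numbers `hₖᴴ Bⁿ hₖ` are real
because `B` is Hermitian. The signal coefficient `∑ₗ wₗ hₖᴴ Bˡ hₖ` is `wᵀ φₖ`, so both the
signal power and the total power match the two sides of the formula.
-/

open Matrix MeasureTheory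

section Moments

variable {Ω : Type*} [MeasurableSpace Ω] {μ : Measure Ω} {ι κ : Type*} [Fintype ι] [Fintype κ]

lemma integral_normSq_add_of_integral_mul_star_eq_zero {u v : Ω → ℂ}
    (hu : Integrable (fun ω => u ω * star (u ω)) μ)
    (hv : Integrable (fun ω => v ω * star (v ω)) μ)
    (huv : Integrable (fun ω => u ω * star (v ω)) μ)
    (h : ∫ ω, u ω * star (v ω) ∂μ = 0) :
    ∫ ω, Complex.normSq (u ω + v ω) ∂μ
      = ∫ ω, Complex.normSq (u ω) ∂μ + ∫ ω, Complex.normSq (v ω) ∂μ := by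
  have hnormSq : ∀ f : Ω → ℂ, (fun ω => Complex.normSq (f ω)) = fun ω => (f ω * star (f ω)).re :=
    fun f => funext fun ω => by rw [Complex.star_def, Complex.mul_conj, Complex.ofReal_re]
  have hu' : Integrable (fun ω => Complex.normSq (u ω)) μ := by rw [hnormSq]; exact hu.re
  have hv' : Integrable (fun ω => Complex.normSq (v ω)) μ := by rw [hnormSq]; exact hv.re
  have huv' : Integrable (fun ω => (u ω * star (v ω)).re) μ := huv.re
  have hcross : ∫ ω, (u ω * star (v ω)).re ∂μ = 0 := by
    have := integral_re huv
    simp only [RCLike.re_to_complex] at this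
    rw [this, h, Complex.zero_re]
  simp_rw [Complex.normSq_add, ← Complex.star_def]
  have hsum : Integrable (fun ω => Complex.normSq (u ω) + Complex.normSq (v ω)) μ := hu'.add hv'
  rw [integral_add hsum (huv'.const_mul 2), integral_const_mul, hcross, mul_zero,
    add_zero, integral_add hu' hv']

lemma ofReal_integral_normSq (f : Ω → ℂ) :
    ((∫ ω, Complex.normSq (f ω) ∂μ : ℝ) : ℂ) = ∫ ω, f ω * star (f ω) ∂μ := by
  simp_rw [Complex.star_def, Complex.mul_conj]
  exact integral_complex_ofReal.symm

lemma dotProduct_mul_star_dotProduct (a : ι → ℂ) (b : κ → ℂ) (y : ι → ℂ) (z : κ → ℂ) :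
    (a ⬝ᵥ y) * star (b ⬝ᵥ z) = ∑ s, ∑ t, a s * star (b t) * (y s * star (z t)) := by
  simp only [dotProduct, star_sum, star_mul', Finset.sum_mul_sum]
  exact Finset.sum_congr rfl fun s _ => Finset.sum_congr rfl fun t _ => by ring

lemma integrable_dotProduct_mul_star_dotProduct (a : ι → ℂ) (b : κ → ℂ)
    {y : Ω → ι → ℂ} {z : Ω → κ → ℂ}
    (hyz : ∀ s t, Integrable (fun ω => y ω s * star (z ω t)) μ) :
    Integrable (fun ω => (a ⬝ᵥ y ω) * star (b ⬝ᵥ z ω)) μ := by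
  simp_rw [dotProduct_mul_star_dotProduct]
  exact integrable_finsetSum _ fun s _ =>
    integrable_finsetSum _ fun t _ => (hyz s t).const_mul _

lemma integral_dotProduct_mul_star_dotProduct (a : ι → ℂ) (b : κ → ℂ)
    {y : Ω → ι → ℂ} {z : Ω → κ → ℂ}
    (hyz : ∀ s t, Integrable (fun ω => y ω s * star (z ω t)) μ) :
    ∫ ω, (a ⬝ᵥ y ω) * star (b ⬝ᵥ z ω) ∂μ
      = ∑ s, ∑ t, a s * star (b t) * ∫ ω, y ω s * star (z ω t) ∂μ := by
  simp_rw [dotProduct_mul_star_dotProduct]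
  rw [integral_finsetSum _ fun s _ =>
    integrable_finsetSum _ fun t _ => (hyz s t).const_mul _]
  refine Finset.sum_congr rfl fun s _ => ?_
  rw [integral_finsetSum _ fun t _ => (hyz s t).const_mul _]
  exact Finset.sum_congr rfl fun t _ => integral_const_mul _ _

lemma integral_dotProduct_mul_star_dotProduct_of_white [DecidableEq ι] (a : ι → ℂ)
    {y : Ω → ι → ℂ} (c : ℂ)
    (hyy : ∀ s t, Integrable (fun ω => y ω s * star (y ω t)) μ)
    (hcov : ∀ s t, ∫ ω, y ω s * star (y ω t) ∂μ = if s = t then c else 0) :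
    ∫ ω, (a ⬝ᵥ y ω) * star (a ⬝ᵥ y ω) ∂μ = c * (a ⬝ᵥ star a) := by
  rw [integral_dotProduct_mul_star_dotProduct a a hyy]
  simp only [hcov, mul_ite, mul_zero, Finset.sum_ite_eq, Finset.mem_univ, if_true, dotProduct,
    Finset.mul_sum, Pi.star_apply]
  exact Finset.sum_congr rfl fun s _ => by ring

lemma ofReal_integral_normSq_dotProduct_add_dotProduct [DecidableEq ι] [DecidableEq κ]
    (a : ι → ℂ) (b : κ → ℂ) {y : Ω → ι → ℂ} {z : Ω → κ → ℂ} (σy σz : ℂ)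
    (hyy : ∀ s t, Integrable (fun ω => y ω s * star (y ω t)) μ)
    (hzz : ∀ s t, Integrable (fun ω => z ω s * star (z ω t)) μ)
    (hyz : ∀ s t, Integrable (fun ω => y ω s * star (z ω t)) μ)
    (hcovy : ∀ s t, ∫ ω, y ω s * star (y ω t) ∂μ = if s = t then σy else 0)
    (hcovz : ∀ s t, ∫ ω, z ω s * star (z ω t) ∂μ = if s = t then σz else 0)
    (hcovyz : ∀ s t, ∫ ω, y ω s * star (z ω t) ∂μ = 0) :
    ((∫ ω, Complex.normSq (a ⬝ᵥ y ω + b ⬝ᵥ z ω) ∂μ : ℝ) : ℂ)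
      = σy * (a ⬝ᵥ star a) + σz * (b ⬝ᵥ star b) := by
  have hcross : ∫ ω, (a ⬝ᵥ y ω) * star (b ⬝ᵥ z ω) ∂μ = 0 := by
    simp only [integral_dotProduct_mul_star_dotProduct a b hyz, hcovyz, mul_zero,
      Finset.sum_const_zero]
  rw [integral_normSq_add_of_integral_mul_star_eq_zero
      (integrable_dotProduct_mul_star_dotProduct a a hyy)
      (integrable_dotProduct_mul_star_dotProduct b b hzz)
      (integrable_dotProduct_mul_star_dotProduct a b hyz) hcross,
    Complex.ofReal_add, ofReal_integral_normSq, ofReal_integral_normSq,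
    integral_dotProduct_mul_star_dotProduct_of_white a σy hyy hcovy,
    integral_dotProduct_mul_star_dotProduct_of_white b σz hzz hcovz]

end Moments

lemma star_vecMul_dotProduct_star {α : Type*} [CommRing α] [StarRing α] {n m : Type*}
    [Fintype n] [Fintype m] (v : n → α) (A : Matrix n m α) :
    (star v ᵥ* A) ⬝ᵥ star (star v ᵥ* A) = star v ⬝ᵥ ((A * Aᴴ) *ᵥ v) := by
  rw [star_vecMul, star_star, dotProduct_mulVec, vecMul_vecMul, ← dotProduct_mulVec]

lemma sum_smul_pow_mul_pow_mul_sum_smul_pow {R A : Type*} [CommSemiring R] [Semiring A]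
    [Algebra R A] {L : ℕ} (w : Fin L → R) (b : A) (d : ℕ) :
    (∑ l : Fin L, w l • b ^ (l : ℕ)) * b ^ d * ∑ m : Fin L, w m • b ^ (m : ℕ)
      = ∑ l : Fin L, ∑ m : Fin L, (w l * w m) • b ^ ((l : ℕ) + m + d) := by
  simp only [Finset.sum_mul, Finset.mul_sum, smul_mul_assoc, mul_smul_comm, Finset.smul_sum,
    smul_smul, ← pow_add]
  refine Finset.sum_congr rfl fun l _ => Finset.sum_congr rfl fun m _ => ?_
  congr 2
  ring

lemma dotProduct_sum_smul_pow_mul_pow_mul_sum_smul_pow_mulVec {R n : Type*} [CommSemiring R]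
    [Fintype n] [DecidableEq n] {L : ℕ} (w : Fin L → R) (B : Matrix n n R) (d : ℕ)
    (u v : n → R) :
    u ⬝ᵥ (((∑ l : Fin L, w l • B ^ (l : ℕ)) * B ^ d * ∑ m : Fin L, w m • B ^ (m : ℕ)) *ᵥ v)
      = ∑ l : Fin L, ∑ m : Fin L, w l * w m * (u ⬝ᵥ (B ^ ((l : ℕ) + m + d) *ᵥ v)) := by
  simp only [sum_smul_pow_mul_pow_mul_sum_smul_pow, sum_mulVec, dotProduct_sum, smul_mulVec,
    dotProduct_smul, smul_eq_mul]

theorem sinr_polynomial_expansion_general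
    (N K L : ℕ) (H : Matrix (Fin N) (Fin K) ℂ) (s2 : ℝ) (w : Fin L → ℝ) (k : Fin K)
    {Ω : Type*} [MeasurableSpace Ω] (μ : Measure Ω)
    (x : Ω → Fin K → ℂ) (nv : Ω → Fin N → ℂ)
    (hxx : ∀ i j, ∫ ω, x ω i * star (x ω j) ∂μ = if i = j then 1 else 0)
    (hnn : ∀ i j, ∫ ω, nv ω i * star (nv ω j) ∂μ = if i = j then (s2 : ℂ) else 0)
    (hxn : ∀ i j, ∫ ω, x ω i * star (nv ω j) ∂μ = 0)
    (hixx : ∀ i j, Integrable (fun ω => x ω i * star (x ω j)) μ)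
    (hinn : ∀ i j, Integrable (fun ω => nv ω i * star (nv ω j)) μ)
    (hixn : ∀ i j, Integrable (fun ω => x ω i * star (nv ω j)) μ) :
    let B : Matrix (Fin N) (Fin N) ℂ := H * Hᴴ
    let P : Matrix (Fin N) (Fin N) ℂ := ∑ l : Fin L, ((w l : ℂ) • B ^ (l : ℕ))
    let hk : Fin N → ℂ := fun i => H i k
    -- estimator x̂ₖ = hₖᴴ P (Hx + n)
    let xhat : Ω → ℂ := fun ω => star hk ⬝ᵥ (P *ᵥ (H *ᵥ x ω + nv ω))
    -- `bkk n = hₖᴴ Bⁿ hₖ`, the diagonal entry `[B^{n+1}]ₖₖ`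
    let bkk : ℕ → ℂ := fun n => star hk ⬝ᵥ (B ^ n *ᵥ hk)
    -- signal power |∑ₗ wₗ [B^{l+1}]ₖₖ|²
    let S : ℝ := Complex.normSq (∑ l : Fin L, (w l : ℂ) * bkk (l : ℕ))
    let phik : Fin L → ℝ := fun i => (bkk (i : ℕ)).re
    let Phik : Matrix (Fin L) (Fin L) ℝ := fun i j =>
      (bkk ((i : ℕ) + (j : ℕ) + 1)).re + s2 * (bkk ((i : ℕ) + (j : ℕ))).re
    w ⬝ᵥ (Phik *ᵥ w) - (w ⬝ᵥ phik) ^ 2 ≠ 0 →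
      S / ((∫ ω, Complex.normSq (xhat ω) ∂μ) - S)
        = (w ⬝ᵥ phik) ^ 2 / (w ⬝ᵥ (Phik *ᵥ w) - (w ⬝ᵥ phik) ^ 2) := by
  intro B P hk xhat bkk S phik Phik _
  have hB : B.IsHermitian := isHermitian_mul_conjTranspose_self H
  obtain ⟨β, hβ⟩ : ∃ β : ℕ → ℝ, ∀ n, star hk ⬝ᵥ (B ^ n *ᵥ hk) = β n :=
    ⟨fun n => (bkk n).re, fun n =>
      Complex.ext rfl ((hB.pow n).im_star_dotProduct_mulVec_self hk)⟩
  have hP : Pᴴ = P := by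
    simp only [P, conjTranspose_sum, conjTranspose_smul, conjTranspose_pow, hB.eq,
      Complex.star_def, Complex.conj_ofReal]
  -- `B ^ 1` and `B ^ 0` so that the expansion of `P * B ^ d * P` applies with `d = 1, 0`
  have hpower : ((∫ ω, Complex.normSq (xhat ω) ∂μ : ℝ) : ℂ)
      = star hk ⬝ᵥ ((P * B ^ 1 * P) *ᵥ hk) + s2 * star hk ⬝ᵥ ((P * B ^ 0 * P) *ᵥ hk) := by
    have hxhat : xhat = fun ω => (star hk ᵥ* (P * H)) ⬝ᵥ x ω + (star hk ᵥ* P) ⬝ᵥ nv ω :=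
      funext fun ω => by
        simp only [xhat, mulVec_add, dotProduct_add, mulVec_mulVec, dotProduct_mulVec]
    rw [hxhat, ofReal_integral_normSq_dotProduct_add_dotProduct _ _ 1 s2 hixx hinn hixn hxx hnn
      hxn, one_mul, star_vecMul_dotProduct_star, star_vecMul_dotProduct_star, conjTranspose_mul,
      hP]
    simp only [B, pow_one, pow_zero, Matrix.mul_one, Matrix.mul_assoc]
  have hE : ∫ ω, Complex.normSq (xhat ω) ∂μ = w ⬝ᵥ (Phik *ᵥ w) := by
    apply Complex.ofReal_injective
    rw [hpower, dotProduct_sum_smul_pow_mul_pow_mul_sum_smul_pow_mulVec,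
      dotProduct_sum_smul_pow_mul_pow_mul_sum_smul_pow_mulVec]
    simp only [hβ, Phik, bkk, Complex.ofReal_re, add_zero]
    simp only [dotProduct, mulVec, Finset.mul_sum, ← Finset.sum_add_distrib]
    push_cast
    exact Finset.sum_congr rfl fun l _ => Finset.sum_congr rfl fun m _ => by ring
  have hS : S = (w ⬝ᵥ phik) ^ 2 := by
    have hsignal : ∑ l : Fin L, (w l : ℂ) * bkk l = ((w ⬝ᵥ phik : ℝ) : ℂ) := by
      simp only [phik, bkk, hβ, Complex.ofReal_re]
      push_cast [dotProduct]
      rfl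
    rw [show S = Complex.normSq _ from rfl, hsignal, Complex.normSq_ofReal, sq]
  rw [hS, hE]

/-- SINR expression for the polynomial expansion detector: the ratio of the power of the
signal component (due to `x_k`) to the power of the remaining (interference plus noise)
components equals `(wᵀφₖφₖᵀw) / (wᵀ(Φₖ - φₖφₖᵀ)w)`.  Here `[Bⁿ]ₖₖ = hₖᴴ Bⁿ⁻¹ hₖ` and,
in the 0-based indexing below, `bkk n = hₖᴴ Bⁿ hₖ = [B^{n+1}]ₖₖ`. -/
theorem sinr_polynomial_expansion
    (N K L : ℕ) (H : Matrix (Fin N) (Fin K) ℂ) (s2 : ℝ) (w : Fin L → ℝ) (k : Fin K)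
    {Ω : Type*} [MeasurableSpace Ω] (μ : Measure Ω) [IsProbabilityMeasure μ]
    (x : Ω → Fin K → ℂ) (nv : Ω → Fin N → ℂ)
    (hxm : ∀ i, ∫ ω, x ω i ∂μ = 0) (hnm : ∀ i, ∫ ω, nv ω i ∂μ = 0)
    (hxx : ∀ i j, ∫ ω, x ω i * star (x ω j) ∂μ = if i = j then 1 else 0)
    (hnn : ∀ i j, ∫ ω, nv ω i * star (nv ω j) ∂μ = if i = j then (s2 : ℂ) else 0)
    (hxn : ∀ i j, ∫ ω, x ω i * star (nv ω j) ∂μ = 0)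
    (hixx : ∀ i j, Integrable (fun ω => x ω i * star (x ω j)) μ)
    (hinn : ∀ i j, Integrable (fun ω => nv ω i * star (nv ω j)) μ)
    (hixn : ∀ i j, Integrable (fun ω => x ω i * star (nv ω j)) μ) :
    let B : Matrix (Fin N) (Fin N) ℂ := H * Hᴴ
    let P : Matrix (Fin N) (Fin N) ℂ := ∑ l : Fin L, ((w l : ℂ) • B ^ (l : ℕ))
    let hk : Fin N → ℂ := fun i => H i k
    -- estimator x̂ₖ = hₖᴴ P (Hx + n)
    let xhat : Ω → ℂ := fun ω => star hk ⬝ᵥ (P *ᵥ (H *ᵥ x ω + nv ω))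
    -- `bkk n = hₖᴴ Bⁿ hₖ`, the diagonal entry `[B^{n+1}]ₖₖ`
    let bkk : ℕ → ℂ := fun n => star hk ⬝ᵥ (B ^ n *ᵥ hk)
    -- signal power |∑ₗ wₗ [B^{l+1}]ₖₖ|²
    let S : ℝ := Complex.normSq (∑ l : Fin L, (w l : ℂ) * bkk (l : ℕ))
    let phik : Fin L → ℝ := fun i => (bkk (i : ℕ)).re
    let Phik : Matrix (Fin L) (Fin L) ℝ := fun i j =>
      (bkk ((i : ℕ) + (j : ℕ) + 1)).re + s2 * (bkk ((i : ℕ) + (j : ℕ))).re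
    w ⬝ᵥ (Phik *ᵥ w) - (w ⬝ᵥ phik) ^ 2 ≠ 0 →
      S / ((∫ ω, Complex.normSq (xhat ω) ∂μ) - S)
        = (w ⬝ᵥ phik) ^ 2 / (w ⬝ᵥ (Phik *ᵥ w) - (w ⬝ᵥ phik) ^ 2) :=
  sinr_polynomial_expansion_general N K L H s2 w k μ x nv hxx hnn hxn hixx hinn hixn
end
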